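/- arXiv:2506.08373 — 3 statements merged into one kernel-verified Lean document; each statement's English description precedes it below -/
import Mathlib

section
/- For all vectors x, y ∈ ℝⁿ, the softmax map satisfies ‖Softmax(x) − Softmax(y)‖₂ ≤ ‖x − y‖_∞, where ‖·‖₂ is the Euclidean norm and ‖·‖_∞ is the supremum norm. -/
/-!
Along the segment `t ↦ y + t (x - y)`, the derivative of softmax at `z` in direction `v` is
`s ⊙ (v - ⟨s, v⟩)` with `s = softmax z` a probability vector. Its squared Euclidean norm
`∑ sᵢ² (vᵢ - ⟨s, v⟩)²` is at most the variance `∑ sᵢ (vᵢ - ⟨s, v⟩)²` of `v` under `s`, hence at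
most `‖v‖_∞²`. The mean value theorem applied to `t ↦ ⟨a, softmax (y + t (x - y))⟩`, with
`a = softmax x - softmax y`, then gives `‖a‖₂² ≤ ‖a‖₂ ‖x - y‖_∞`.
-/

open scoped BigOperators ENNReal

/-- Softmax map on `ℝⁿ`. -/
noncomputable def softmax {n : ℕ} (x : Fin n → ℝ) : Fin n → ℝ :=
  fun i => Real.exp (x i) / ∑ j, Real.exp (x j)

/-- Euclidean norm on `ℝⁿ`. -/
noncomputable def l2norm {n : ℕ} (x : Fin n → ℝ) : ℝ :=
  Real.sqrt (∑ i, x i ^ 2)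

/-- Supremum norm on `ℝⁿ`. -/
noncomputable def linftyNorm {n : ℕ} (x : Fin n → ℝ) : ℝ :=
  ⨆ i, |x i|

/-- Spectral norm (operator norm w.r.t. Euclidean norms) of a real matrix. -/
noncomputable def spectralNorm_ {m n : ℕ} (A : Matrix (Fin m) (Fin n) ℝ) : ℝ :=
  sSup { r | ∃ x : Fin n → ℝ, l2norm x ≤ 1 ∧ r = l2norm (A.mulVec x) }

/-- Smallest singular value of a square real matrix. -/
noncomputable def sigmaMin {d : ℕ} (W : Matrix (Fin d) (Fin d) ℝ) : ℝ :=
  sInf { r | ∃ x : Fin d → ℝ, l2norm x = 1 ∧ r = l2norm (W.mulVec x) }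

/-- `‖X‖_{∞,2}`: the maximum Euclidean norm of a row of `X`. -/
noncomputable def maxRowNorm {n d : ℕ} (X : Matrix (Fin n) (Fin d) ℝ) : ℝ :=
  ⨆ i, l2norm (X i)

section WeightedVariance

variable {ι : Type*} [Fintype ι]

theorem sum_mul_sq_sub_wmean (s v : ι → ℝ) (hsum : ∑ i, s i = 1) :
    ∑ i, s i * (v i - ∑ j, s j * v j) ^ 2 = ∑ i, s i * v i ^ 2 - (∑ j, s j * v j) ^ 2 := by
  set μ := ∑ j, s j * v j
  have hexpand : ∀ i, s i * (v i - μ) ^ 2 = s i * v i ^ 2 - 2 * μ * (s i * v i) + μ ^ 2 * s i :=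
    fun i => by ring
  simp only [hexpand, Finset.sum_add_distrib, Finset.sum_sub_distrib, ← Finset.mul_sum, hsum]
  ring

theorem sum_sq_mul_sub_wmean_le (s v : ι → ℝ) {M : ℝ} (hs0 : ∀ i, 0 ≤ s i)
    (hsum : ∑ i, s i = 1) (hv : ∀ i, |v i| ≤ M) :
    ∑ i, (s i * (v i - ∑ j, s j * v j)) ^ 2 ≤ M ^ 2 := by
  set μ := ∑ j, s j * v j
  have hs1 : ∀ i, s i ≤ 1 := fun i =>
    hsum ▸ Finset.single_le_sum (fun j _ => hs0 j) (Finset.mem_univ i)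
  calc ∑ i, (s i * (v i - μ)) ^ 2 ≤ ∑ i, s i * (v i - μ) ^ 2 := by
        refine Finset.sum_le_sum fun i _ => ?_
        rw [mul_pow, sq (s i)]
        exact mul_le_mul_of_nonneg_right (mul_le_of_le_one_right (hs0 i) (hs1 i)) (sq_nonneg _)
    _ = ∑ i, s i * v i ^ 2 - μ ^ 2 := sum_mul_sq_sub_wmean s v hsum
    _ ≤ ∑ i, s i * v i ^ 2 := sub_le_self _ (sq_nonneg μ)
    _ ≤ ∑ i, s i * M ^ 2 := by
        refine Finset.sum_le_sum fun i _ => mul_le_mul_of_nonneg_left ?_ (hs0 i)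
        exact sq_le_sq' (abs_le.1 (hv i)).1 (abs_le.1 (hv i)).2
    _ = M ^ 2 := by rw [← Finset.sum_mul, hsum, one_mul]

end WeightedVariance

section Norms

variable {n : ℕ}

theorem l2norm_sq (a : Fin n → ℝ) : l2norm a ^ 2 = ∑ i, a i ^ 2 :=
  Real.sq_sqrt (Finset.sum_nonneg fun i _ => sq_nonneg (a i))

theorem l2norm_nonneg (a : Fin n → ℝ) : 0 ≤ l2norm a :=
  Real.sqrt_nonneg _

theorem sum_mul_le_l2norm_mul_l2norm (a b : Fin n → ℝ) :
    ∑ i, a i * b i ≤ l2norm a * l2norm b :=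
  Real.sum_mul_le_sqrt_mul_sqrt _ _ _

theorem linftyNorm_nonneg (v : Fin n → ℝ) : 0 ≤ linftyNorm v :=
  Real.iSup_nonneg fun i => abs_nonneg (v i)

theorem abs_le_linftyNorm (v : Fin n → ℝ) (i : Fin n) : |v i| ≤ linftyNorm v :=
  le_ciSup (Set.finite_range fun j => |v j|).bddAbove i

end Norms

section SoftmaxDerivative

variable {n : ℕ}

/-- The Jacobian `diag s - s sᵀ` of softmax at `z`, with `s = softmax z`, applied to `v`. -/
noncomputable def softmaxDeriv (z v : Fin n → ℝ) : Fin n → ℝ :=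
  fun i => softmax z i * (v i - ∑ j, softmax z j * v j)

theorem softmax_nonneg (z : Fin n → ℝ) (i : Fin n) : 0 ≤ softmax z i :=
  div_nonneg (Real.exp_nonneg _) (Finset.sum_nonneg fun _ _ => Real.exp_nonneg _)

theorem sum_softmax [Nonempty (Fin n)] (z : Fin n → ℝ) : ∑ i, softmax z i = 1 := by
  simp only [softmax, ← Finset.sum_div]
  exact div_self (Finset.sum_pos (fun j _ => Real.exp_pos _) Finset.univ_nonempty).ne'

theorem hasDerivAt_softmax_add_smul (y v : Fin n → ℝ) (i : Fin n) (t : ℝ) :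
    HasDerivAt (fun t : ℝ => softmax (y + t • v) i) (softmaxDeriv (y + t • v) v i) t := by
  have hexp : ∀ j, HasDerivAt (fun t : ℝ => Real.exp (y j + t * v j))
      (Real.exp (y j + t * v j) * v j) t := fun j => by
    simpa using (((hasDerivAt_id t).mul_const (v j)).const_add (y j)).exp
  have hZ : 0 < ∑ j, Real.exp (y j + t * v j) :=
    Finset.sum_pos (fun j _ => Real.exp_pos _) ⟨i, Finset.mem_univ i⟩
  refine ((hexp i).div (HasDerivAt.fun_sum fun j _ => hexp j) hZ.ne').congr_deriv ?_
  simp only [softmaxDeriv, softmax, Pi.add_apply, Pi.smul_apply, smul_eq_mul, div_mul_eq_mul_div,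
    ← Finset.sum_div]
  field_simp

theorem l2norm_softmaxDeriv_le (z v : Fin n → ℝ) : l2norm (softmaxDeriv z v) ≤ linftyNorm v := by
  rcases isEmpty_or_nonempty (Fin n) with hn | hn
  · simp [l2norm, linftyNorm_nonneg]
  rw [l2norm, Real.sqrt_le_iff]
  exact ⟨linftyNorm_nonneg v, sum_sq_mul_sub_wmean_le _ v (softmax_nonneg z) (sum_softmax z)
    (abs_le_linftyNorm v)⟩

end SoftmaxDerivative

/-- `‖Softmax(x) − Softmax(y)‖₂ ≤ ‖x − y‖_∞`. -/
theorem softmax_l2_le_linfty {n : ℕ} (x y : Fin n → ℝ) :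
    l2norm (softmax x - softmax y) ≤ linftyNorm (x - y) := by
  set a := softmax x - softmax y
  set v := x - y
  set F : ℝ → ℝ := fun t => ∑ i, a i * softmax (y + t • v) i
  have hF : ∀ t, HasDerivAt F (∑ i, a i * softmaxDeriv (y + t • v) v i) t := fun t =>
    HasDerivAt.fun_sum fun i _ => (hasDerivAt_softmax_add_smul y v i t).const_mul (a i)
  have hF' : ∀ t, deriv F t ≤ l2norm a * linftyNorm v := fun t =>
    (hF t).deriv ▸ (sum_mul_le_l2norm_mul_l2norm a _).trans
      (mul_le_mul_of_nonneg_left (l2norm_softmaxDeriv_le _ v) (l2norm_nonneg a))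
  have hmvt := image_sub_le_mul_sub_of_deriv_le (fun t => (hF t).differentiableAt) hF' zero_le_one
  have hF10 : F 1 - F 0 = l2norm a ^ 2 := by
    rw [l2norm_sq]
    simp only [F, v, one_smul, zero_smul, add_zero, add_sub_cancel, ← Finset.sum_sub_distrib,
      ← mul_sub, sq]
    rfl
  nlinarith [l2norm_nonneg a, linftyNorm_nonneg v]
end

section
/- Let x, x' ∈ ℝⁿ and set y = Softmax(x), y' = Softmax(x'). Let m = min_i min(y_i, y'_i) and fix p with 1 ≤ p ≤ ∞. If ‖y − y'‖_p ≤ ε, then there exists a scalar c ∈ ℝ such that ‖x − x' − c·𝟏‖_p ≤ ε/m, where 𝟏 ∈ ℝⁿ is the all-ones vector and ‖·‖_p denotes the ℓ_p norm. -/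
open scoped BigOperators ENNReal

/-- Spectral norm (operator norm w.r.t. Euclidean norms) of a real matrix. -/
noncomputable def spectralNormMat {m n : ℕ} (A : Matrix (Fin m) (Fin n) ℝ) : ℝ :=
  sSup { r | ∃ x : Fin n → ℝ, l2norm x ≤ 1 ∧ r = l2norm (A.mulVec x) }

/-- `ℓ_p` norm on `ℝⁿ` for `p ∈ [1, ∞]` (given as an extended nonnegative real). -/
noncomputable def lpNorm {n : ℕ} (p : ℝ≥0∞) (x : Fin n → ℝ) : ℝ :=
  if p = ⊤ then ⨆ i, |x i| else (∑ i, |x i| ^ p.toReal) ^ (1 / p.toReal)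

/-! With `c = log ∑ exp x - log ∑ exp x'`, the `i`-th coordinate of `x - x' - c𝟏` is
`log y_i - log y'_i`. Since `log t ≤ t - 1`, `|log a - log b| ≤ |a - b| / min a b`, so that
coordinate is at most `|y_i - y'_i| / m` in absolute value; the `ℓ_p` norm is monotone and
positively homogeneous, which turns this pointwise bound into the claim. -/

open Real

theorem Real.log_sub_log_le_sub_div {u v : ℝ} (hu : 0 < u) (hv : 0 < v) :
    log v - log u ≤ (v - u) / u := by
  rw [sub_div, div_self hu.ne', ← log_div hv.ne' hu.ne']
  exact log_le_sub_one_of_pos (div_pos hv hu)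

theorem Real.abs_log_sub_log_le_abs_sub_div_min {a b : ℝ} (ha : 0 < a) (hb : 0 < b) :
    |log a - log b| ≤ |a - b| / min a b := by
  have one_sided (u v : ℝ) (hu : 0 < u) (hv : 0 < v) (hmin : min a b ≤ u) :
      log v - log u ≤ |v - u| / min a b :=
    calc log v - log u ≤ (v - u) / u := log_sub_log_le_sub_div hu hv
      _ ≤ |v - u| / u := div_le_div_of_nonneg_right (le_abs_self _) hu.le
      _ ≤ |v - u| / min a b := div_le_div_of_nonneg_left (abs_nonneg _) (lt_min ha hb) hmin
  rw [abs_sub_le_iff]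
  exact ⟨one_sided b a hb ha (min_le_right a b),
    abs_sub_comm a b ▸ one_sided a b ha hb (min_le_left a b)⟩

theorem lpNorm_le_mul_lpNorm_of_abs_le {n : ℕ} {p : ℝ≥0∞} (hp : p ≠ 0) {M : ℝ} (hM : 0 ≤ M)
    {v w : Fin n → ℝ} (hvw : ∀ i, |v i| ≤ M * |w i|) :
    lpNorm p v ≤ M * lpNorm p w := by
  unfold lpNorm
  split_ifs with hp_top
  · have hw : 0 ≤ ⨆ i, |w i| := Real.iSup_nonneg fun i => abs_nonneg (w i)
    refine Real.iSup_le (fun i => (hvw i).trans ?_) (mul_nonneg hM hw)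
    exact mul_le_mul_of_nonneg_left (le_ciSup (f := fun j => |w j|) (Finite.bddAbove_range _) i) hM
  · have ht : 0 < p.toReal := ENNReal.toReal_pos hp hp_top
    set t := p.toReal
    have hsum : ∑ i, |v i| ^ t ≤ M ^ t * ∑ i, |w i| ^ t := by
      rw [Finset.mul_sum]
      refine Finset.sum_le_sum fun i _ => ?_
      rw [← mul_rpow hM (abs_nonneg _)]
      exact rpow_le_rpow (abs_nonneg _) (hvw i) ht.le
    calc (∑ i, |v i| ^ t) ^ (1 / t)
        ≤ (M ^ t * ∑ i, |w i| ^ t) ^ (1 / t) := rpow_le_rpow (by positivity) hsum (by positivity)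
      _ = M * (∑ i, |w i| ^ t) ^ (1 / t) := by
          rw [mul_rpow (by positivity) (by positivity), ← rpow_mul hM, mul_one_div_cancel ht.ne',
            rpow_one]

theorem sum_exp_pos {n : ℕ} (x : Fin n → ℝ) (i : Fin n) : 0 < ∑ j, exp (x j) :=
  Finset.sum_pos (fun j _ => exp_pos (x j)) ⟨i, Finset.mem_univ i⟩

theorem softmax_pos {n : ℕ} (x : Fin n → ℝ) (i : Fin n) : 0 < softmax x i :=
  div_pos (exp_pos _) (sum_exp_pos x i)

theorem log_softmax {n : ℕ} (x : Fin n → ℝ) (i : Fin n) :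
    log (softmax x i) = x i - log (∑ j, exp (x j)) := by
  rw [softmax, log_div (exp_ne_zero _) (sum_exp_pos x i).ne', log_exp]

theorem abs_sub_sub_log_sum_exp_le {n : ℕ} (x x' : Fin n → ℝ) (i : Fin n) :
    |x i - x' i - (log (∑ j, exp (x j)) - log (∑ j, exp (x' j)))|
      ≤ |softmax x i - softmax x' i| / min (softmax x i) (softmax x' i) := by
  have hlog : x i - x' i - (log (∑ j, exp (x j)) - log (∑ j, exp (x' j)))
      = log (softmax x i) - log (softmax x' i) := by
    rw [log_softmax, log_softmax]; ring
  rw [hlog]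
  exact abs_log_sub_log_le_abs_sub_div_min (softmax_pos x i) (softmax_pos x' i)

/-- if `‖Softmax(x) − Softmax(x')‖_p ≤ ε` then there is a scalar `c` with
`‖x − x' − c·𝟏‖_p ≤ ε / m`, where `m = min_i min((Softmax x)_i, (Softmax x')_i)`. -/
theorem inverse_softmax_bound {n : ℕ} (hn : 0 < n) (x x' : Fin n → ℝ)
    (p : ℝ≥0∞) (hp : 1 ≤ p) (ε : ℝ)
    (h : lpNorm p (softmax x - softmax x') ≤ ε) :
    ∃ c : ℝ, lpNorm p (x - x' - fun _ => c)
      ≤ ε / ⨅ i, min (softmax x i) (softmax x' i) := by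
  have : Nonempty (Fin n) := ⟨⟨0, hn⟩⟩
  have hm_pos : 0 < ⨅ i, min (softmax x i) (softmax x' i) := by
    obtain ⟨i, hi⟩ := exists_eq_ciInf_of_finite (f := fun i => min (softmax x i) (softmax x' i))
    rw [← hi]
    exact lt_min (softmax_pos x i) (softmax_pos x' i)
  set m := ⨅ i, min (softmax x i) (softmax x' i)
  refine ⟨log (∑ j, exp (x j)) - log (∑ j, exp (x' j)), ?_⟩
  calc _ ≤ m⁻¹ * lpNorm p (softmax x - softmax x') := by
        refine lpNorm_le_mul_lpNorm_of_abs_le (one_pos.trans_le hp).ne' (inv_nonneg.2 hm_pos.le)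
          fun i => ?_
        rw [← div_eq_inv_mul]
        exact (abs_sub_sub_log_sum_exp_le x x' i).trans
          (div_le_div_of_nonneg_left (abs_nonneg _) hm_pos (ciInf_le (Finite.bddBelow_range _) i))
    _ ≤ ε / m := by
        rw [inv_mul_eq_div]
        exact div_le_div_of_nonneg_right h hm_pos.le
end

section
/- Let M ∈ ℝ^{d×d} and 𝟏 ∈ ℝᵈ the all-ones vector. Then min_{c ∈ ℝᵈ} ‖M − c𝟏ᵀ‖₂ = ‖M (I_d − (1/d) 𝟏𝟏ᵀ)‖₂, and the minimum is attained at c = (1/d) M𝟏; here c𝟏ᵀ denotes the rank-one matrix whose (i,j) entry is c_i and ‖·‖₂ is the spectral norm. -/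
open scoped BigOperators ENNReal

/-- Spectral norm (operator norm w.r.t. Euclidean norms) of a real matrix. -/
noncomputable def matSpectralNorm {m n : ℕ} (A : Matrix (Fin m) (Fin n) ℝ) : ℝ :=
  sSup { r | ∃ x : Fin n → ℝ, l2norm x ≤ 1 ∧ r = l2norm (A.mulVec x) }

/-!
`P = I − (1/d)𝟏𝟏ᵀ` replaces a vector by its deviation from its mean, which does not increase
its Euclidean norm, and `c𝟏ᵀ P = 0`. Hence `M P = (M − c𝟏ᵀ) P` has spectral norm at most
`‖M − c𝟏ᵀ‖₂` for every `c`, and `M P = M − ((1/d) M𝟏)𝟏ᵀ` shows that the bound is attained.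
-/

open Matrix

lemma l2norm_eq_norm {n : ℕ} (x : Fin n → ℝ) :
    l2norm x = ‖(EuclideanSpace.equiv (Fin n) ℝ).symm x‖ := by
  simp [l2norm, EuclideanSpace.norm_eq]

open scoped Matrix.Norms.L2Operator in
lemma bddAbove_l2norm_mulVec {m n : ℕ} (A : Matrix (Fin m) (Fin n) ℝ) :
    BddAbove { r | ∃ x : Fin n → ℝ, l2norm x ≤ 1 ∧ r = l2norm (A *ᵥ x) } := by
  refine ⟨‖A‖, ?_⟩
  rintro r ⟨x, hx, rfl⟩
  rw [l2norm_eq_norm] at hx ⊢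
  calc _ ≤ ‖A‖ * ‖(EuclideanSpace.equiv (Fin n) ℝ).symm x‖ := A.l2_opNorm_mulVec _
    _ ≤ ‖A‖ := mul_le_of_le_one_right (norm_nonneg _) hx

lemma sum_sq_sub_mean {d : ℕ} (x : Fin d → ℝ) :
    ∑ i, (x i - (d : ℝ)⁻¹ * ∑ j, x j) ^ 2 = ∑ i, x i ^ 2 - (d : ℝ)⁻¹ * (∑ j, x j) ^ 2 := by
  rcases eq_or_ne d 0 with rfl | hd
  · simp
  simp only [sub_sq, Finset.sum_add_distrib, Finset.sum_sub_distrib, Finset.sum_const,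
    Finset.card_univ, Fintype.card_fin, nsmul_eq_mul, ← Finset.mul_sum, ← Finset.sum_mul]
  field_simp
  ring

noncomputable def centeringMatrix (d : ℕ) : Matrix (Fin d) (Fin d) ℝ :=
  1 - (d : ℝ)⁻¹ • Matrix.of fun _ _ => 1

lemma centeringMatrix_mulVec {d : ℕ} (x : Fin d → ℝ) :
    centeringMatrix d *ᵥ x = fun i => x i - (d : ℝ)⁻¹ * ∑ j, x j := by
  ext i
  simp [centeringMatrix, mulVec, dotProduct, sub_mul, Finset.sum_sub_distrib, one_apply,
    Finset.mul_sum]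

lemma l2norm_centeringMatrix_mulVec_le {d : ℕ} (x : Fin d → ℝ) :
    l2norm (centeringMatrix d *ᵥ x) ≤ l2norm x := by
  rw [centeringMatrix_mulVec, l2norm, l2norm, sum_sq_sub_mean]
  gcongr
  exact sub_le_self _ (by positivity)

lemma matSpectralNorm_mul_le_of_contracting {m n k : ℕ} (A : Matrix (Fin m) (Fin n) ℝ)
    (P : Matrix (Fin n) (Fin k) ℝ) (hP : ∀ x, l2norm (P *ᵥ x) ≤ l2norm x) :
    matSpectralNorm (A * P) ≤ matSpectralNorm A := by
  refine csSup_le_csSup (bddAbove_l2norm_mulVec A) ⟨_, 0, by simp [l2norm], rfl⟩ ?_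
  rintro r ⟨x, hx, rfl⟩
  exact ⟨P *ᵥ x, (hP x).trans hx, by rw [mulVec_mulVec]⟩

lemma of_const_row_mul_centeringMatrix {m d : ℕ} (c : Fin m → ℝ) :
    (Matrix.of fun i _ => c i : Matrix (Fin m) (Fin d) ℝ) * centeringMatrix d = 0 := by
  ext i j
  have hd : (d : ℝ) ≠ 0 := Nat.cast_ne_zero.mpr (Fin.pos j).ne'
  simp [centeringMatrix, Matrix.mul_apply, mul_sub, Finset.sum_sub_distrib, one_apply]
  field_simp
  ring

lemma mul_centeringMatrix_eq_sub {m d : ℕ} (M : Matrix (Fin m) (Fin d) ℝ) :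
    M * centeringMatrix d = M - Matrix.of fun i _ => (d : ℝ)⁻¹ * (M *ᵥ fun _ => 1) i := by
  ext i j
  simp [centeringMatrix, Matrix.mul_apply, mulVec, dotProduct, mul_sub, Finset.sum_sub_distrib,
    one_apply, Finset.sum_mul, mul_comm]

/-- `min_{c} ‖M − c𝟏ᵀ‖₂ = ‖M(I_d − (1/d)𝟏𝟏ᵀ)‖₂`, attained at `c = (1/d) M𝟏`. -/
theorem min_rank_one_correction {d : ℕ} (M : Matrix (Fin d) (Fin d) ℝ) :
    (∀ c : Fin d → ℝ,
      matSpectralNorm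
          (M * ((1 : Matrix (Fin d) (Fin d) ℝ) - (d : ℝ)⁻¹ • Matrix.of fun _ _ => (1 : ℝ)))
        ≤ matSpectralNorm (M - Matrix.of fun i _ => c i)) ∧
    matSpectralNorm
        (M - Matrix.of fun i _ => (d : ℝ)⁻¹ * M.mulVec (fun _ => (1 : ℝ)) i)
      = matSpectralNorm
          (M * ((1 : Matrix (Fin d) (Fin d) ℝ) - (d : ℝ)⁻¹ • Matrix.of fun _ _ => (1 : ℝ))) := by
  change (∀ c : Fin d → ℝ, matSpectralNorm (M * centeringMatrix d) ≤ _) ∧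
    _ = matSpectralNorm (M * centeringMatrix d)
  refine ⟨fun c => ?_, by rw [mul_centeringMatrix_eq_sub]⟩
  have hMP : M * centeringMatrix d = (M - Matrix.of fun i _ => c i) * centeringMatrix d := by
    rw [Matrix.sub_mul, of_const_row_mul_centeringMatrix, sub_zero]
  rw [hMP]
  exact matSpectralNorm_mul_le_of_contracting _ _ l2norm_centeringMatrix_mulVec_le
end
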